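/- Let R be a commutative noetherian normal domain and Λ a module-finite R-algebra. For any finitely generated Λ-module X and any finitely generated Λ-module Y which is reflexive as an R-module, the R-module Hom_Λ(X, Y) is a reflexive R-module. -/

import Mathlib

/-!
STATEMENT 2: Let `R` be a commutative noetherian normal domain and `Λ` a
module-finite `R`-algebra.  For any finitely generated `Λ`-module `X` and any
finitely generated `Λ`-module `Y` which is reflexive as an `R`-module, the
`R`-module `Hom_Λ(X, Y)` is a reflexive `R`-module.
(Proposition 2.4 (1) of Iyama-Reiten.)
-/

universe u

open Module LinearMap

lemma baer_fractionRing (R : Type u) [CommRing R] [IsDomain R] :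
    Module.Baer R (FractionRing R) := by
  intro I g
  by_cases hI : I = ⊥
  · subst hI
    refine ⟨0, fun x hx => ?_⟩
    obtain rfl : x = 0 := hx
    exact (map_zero g).symm
  · obtain ⟨a₀, ha₀I, ha₀⟩ := Submodule.exists_mem_ne_zero_of_ne_bot hI
    set K := FractionRing R
    have halg : (algebraMap R K) a₀ ≠ 0 := by
      simpa using (IsFractionRing.injective R K).ne_iff.mpr ha₀
    refine ⟨LinearMap.toSpanSingleton R K ((algebraMap R K a₀)⁻¹ * g ⟨a₀, ha₀I⟩),
      fun x hx => ?_⟩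
    have key : a₀ • g ⟨x, hx⟩ = x • g ⟨a₀, ha₀I⟩ := by
      rw [← map_smul, ← map_smul]
      congr 1
      ext
      simp [mul_comm]
    rw [Algebra.smul_def, Algebra.smul_def] at key
    have : x • (((algebraMap R K) a₀)⁻¹ * g ⟨a₀, ha₀I⟩) = g ⟨x, hx⟩ := by
      rw [Algebra.smul_def]
      rw [mul_left_comm, ← key, inv_mul_cancel_left₀ halg]
    simpa [LinearMap.toSpanSingleton_apply] using this

lemma exists_smul_extend {R B : Type u} [CommRing R] [IsDomain R] [AddCommGroup B] [Module R B]
    [Module.Finite R B] (A : Submodule R B) (χ : A →ₗ[R] R) :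
    ∃ (r : R), r ≠ 0 ∧ ∃ ψ : B →ₗ[R] R, ∀ a : A, ψ a = r * χ a := by
  set K := FractionRing R
  have hinj : Module.Injective R K := (baer_fractionRing R).injective
  obtain ⟨ψK, hψK⟩ := hinj.out A.subtype (Submodule.injective_subtype A)
    ((Algebra.linearMap R K).comp χ)
  -- find common denominator for ψK on generators
  obtain ⟨n, v, hv⟩ := Module.Finite.exists_fin (R := R) (M := B)
  obtain ⟨b, hb⟩ := IsLocalization.exist_integer_multiples_of_finite
    (nonZeroDivisors R) (fun i : Fin n => ψK (v i))
  have hb0 : (b : R) ≠ 0 := nonZeroDivisors.coe_ne_zero b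
  have hint : ∀ x : B, IsLocalization.IsInteger R ((b : R) • ψK x) := by
    intro x
    have hx : x ∈ Submodule.span R (Set.range v) := hv ▸ Submodule.mem_top
    induction hx using Submodule.span_induction with
    | mem x hx =>
      obtain ⟨i, rfl⟩ := hx
      exact hb i
    | zero => simp [IsLocalization.IsInteger]
    | add x y _ _ hx hy =>
      obtain ⟨y₁, h₁⟩ := hx; obtain ⟨y₂, h₂⟩ := hy
      exact ⟨y₁ + y₂, by rw [map_add, h₁, h₂, map_add, smul_add]⟩
    | smul r x _ hx =>
      obtain ⟨y₁, h₁⟩ := hx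
      exact ⟨r * y₁, by rw [map_mul, h₁, ψK.map_smul, smul_comm, Algebra.smul_def, Algebra.smul_def]⟩
  choose c hc using hint
  have hcadd : ∀ x y : B, c (x + y) = c x + c y := by
    intro x y
    apply IsFractionRing.injective R K
    rw [map_add, hc, hc, hc, map_add, smul_add]
  have hcsmul : ∀ (r : R) (x : B), c (r • x) = r • c x := by
    intro r x
    apply IsFractionRing.injective R K
    rw [hc, ψK.map_smul, smul_comm, ← hc, Algebra.smul_def, ← map_mul, smul_eq_mul]
  refine ⟨b, hb0, ⟨⟨⟨c, hcadd⟩, hcsmul⟩, fun a => ?_⟩⟩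
  apply IsFractionRing.injective R K
  show algebraMap R K (c _) = _
  rw [hc, show (a : B) = A.subtype a from rfl, hψK]
  simp [Algebra.smul_def, map_mul, mul_assoc]

lemma exists_dual_ne_zero {R M : Type u} [CommRing R] [IsDomain R] [AddCommGroup M] [Module R M]
    [Module.Finite R M] [NoZeroSMulDivisors R M] {m : M} (hm : m ≠ 0) :
    ∃ φ : M →ₗ[R] R, φ m ≠ 0 := by
  let e := LinearEquiv.toSpanNonzeroSingleton R M m hm
  obtain ⟨r, hr, ψ, hψ⟩ := exists_smul_extend (R := R) (Submodule.span R {m})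
    (e.symm.toLinearMap)
  refine ⟨ψ, ?_⟩
  have : ψ (e 1) = r * (e.symm (e 1)) := hψ (e 1)
  rw [LinearEquiv.symm_apply_apply] at this
  have he1 : ((e 1 : Submodule.span R {m}) : M) = m := by
    simp [e, LinearEquiv.toSpanNonzeroSingleton]
  rw [he1] at this
  rw [this]
  simpa using hr

open Module in
lemma isReflexive_of_quotient_torsionFree {R B : Type u} [CommRing R] [IsDomain R]
    [AddCommGroup B] [Module R B] [Module.Finite R B] [Module.IsReflexive R B]
    (A : Submodule R B) [NoZeroSMulDivisors R (B ⧸ A)] : Module.IsReflexive R A := by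
  constructor
  constructor
  · -- injectivity
    rw [injective_iff_map_eq_zero]
    intro a ha
    have h1 : ∀ ψ : Dual R B, ψ (a : B) = 0 := by
      intro ψ
      have := congrArg (fun F => F (ψ ∘ₗ A.subtype)) ha
      simpa using this
    have : Dual.eval R B (a : B) = 0 := by ext ψ; exact h1 ψ
    have := (bijective_dual_eval R B).injective (this.trans (map_zero _).symm)
    exact Subtype.ext (by simpa using this)
  · -- surjectivity
    intro Φ
    set Ψ : Dual R (Dual R B) := Φ ∘ₗ A.subtype.dualMap with hΨ
    obtain ⟨b, hb⟩ := (bijective_dual_eval R B).surjective Ψ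
    have hbA : b ∈ A := by
      by_contra hbA
      have hq : A.mkQ b ≠ 0 := by
        simpa [Submodule.Quotient.mk_eq_zero] using hbA
      obtain ⟨φ, hφ⟩ := exists_dual_ne_zero (R := R) hq
      have h0 : A.subtype.dualMap (φ ∘ₗ A.mkQ) = 0 := by
        ext a; simp [(Submodule.Quotient.mk_eq_zero A).mpr a.2]
      have : Ψ (φ ∘ₗ A.mkQ) = 0 := by rw [hΨ]; simp [h0]
      rw [← hb] at this
      simp only [Dual.eval_apply, LinearMap.comp_apply, Submodule.mkQ_apply] at this
      exact hφ this
    refine ⟨⟨b, hbA⟩, ?_⟩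
    ext χ
    obtain ⟨r, hr, ψ, hψ⟩ := exists_smul_extend A χ
    have h1 : A.subtype.dualMap ψ = r • χ := by
      ext a; simpa using hψ a
    have h2 : r * Φ χ = r * χ ⟨b, hbA⟩ := by
      have : Φ (r • χ) = r • Φ χ := map_smul Φ r χ
      rw [← h1] at this
      have hΨψ : Ψ ψ = ψ b := by rw [← hb]; rfl
      have : Ψ ψ = r • Φ χ := by rw [hΨ]; exact this
      rw [hΨψ, smul_eq_mul] at this
      rw [← this]
      exact hψ ⟨b, hbA⟩
    have := mul_left_cancel₀ hr h2
    simpa using this.symm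

lemma isReflexive_of_subsingleton (R M : Type*) [CommRing R] [AddCommGroup M] [Module R M]
    [Subsingleton M] : Module.IsReflexive R M := by
  constructor
  constructor
  · intro a b _
    exact Subsingleton.elim a b
  · intro Φ
    refine ⟨0, ?_⟩
    ext χ
    have hχ : χ = 0 := by
      ext m
      rw [Subsingleton.elim m 0, map_zero]
      rfl
    simp [hχ]

lemma isReflexive_pi_fin {R Y : Type u} [CommRing R] [AddCommGroup Y] [Module R Y]
    [Module.IsReflexive R Y] (n : ℕ) : Module.IsReflexive R (Fin n → Y) := by
  induction n with
  | zero => exact isReflexive_of_subsingleton R _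
  | succ n ih =>
    let e : (Y × (Fin n → Y)) ≃ₗ[R] (Fin (n + 1) → Y) :=
      { toFun := fun p => Fin.cons p.1 p.2
        invFun := fun f => (f 0, Fin.tail f)
        map_add' := by
          intro p q
          funext i
          induction i using Fin.cases <;> simp
        map_smul' := by
          intro r p
          funext i
          induction i using Fin.cases <;> simp
        left_inv := fun p => by simp [Fin.tail_cons]
        right_inv := fun f => by simp [Fin.cons_self_tail] }
    exact Module.equiv e

lemma noZeroSMulDivisors_of_isReflexive (R M : Type u) [CommRing R] [IsDomain R] [AddCommGroup M]
    [Module R M] [Module.IsReflexive R M] : NoZeroSMulDivisors R M := by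
  constructor
  intro r m hrm
  by_cases hr : r = 0
  · exact Or.inl hr
  refine Or.inr ?_
  have h0 : Module.Dual.eval R M m = 0 := by
    ext χ
    have : r • χ m = 0 := by rw [← map_smul, hrm, map_zero]
    simpa [smul_eq_mul, hr] using this
  exact (Module.bijective_dual_eval R M).injective (h0.trans (map_zero _).symm)


theorem hom_isReflexive_of_isReflexive
    (R : Type u) [CommRing R] [IsNoetherianRing R] [IsDomain R] [IsIntegrallyClosed R]
    (Λ : Type u) [Ring Λ] [Algebra R Λ] [Module.Finite R Λ]
    (X : Type u) [AddCommGroup X] [Module Λ X] [Module.Finite Λ X]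
    (Y : Type u) [AddCommGroup Y] [Module R Y] [Module Λ Y] [IsScalarTower R Λ Y]
    [Module.Finite Λ Y] [Module.IsReflexive R Y] :
    Module.IsReflexive R (X →ₗ[Λ] Y) := by
  have hYfin : Module.Finite R Y := Module.Finite.trans Λ Y
  have hYtf : NoZeroSMulDivisors R Y := noZeroSMulDivisors_of_isReflexive R Y
  obtain ⟨n, π, hπ⟩ := Module.Finite.exists_fin' Λ X
  have hsmul_comm : ∀ (r : R) (l : Λ) (y : Y), l • (r • y) = r • (l • y) := by
    intro r l y
    rw [← algebraMap_smul Λ r y, ← algebraMap_smul Λ r (l • y),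
      ← mul_smul, ← mul_smul, Algebra.commutes]
  -- the generators of X
  set xg : Fin n → X := fun i => π (Pi.single i 1) with hxg
  have hgen : ∀ (f : X →ₗ[Λ] Y) (v : Fin n → Λ),
      f (π v) = ∑ i, v i • f (xg i) := by
    intro f v
    have hv : v = ∑ i, v i • (Pi.single i 1 : Fin n → Λ) := by
      funext j
      simp [Pi.single_apply, Finset.sum_apply]
    calc f (π v) = f (π (∑ i, v i • (Pi.single i 1 : Fin n → Λ))) := by rw [← hv]
    _ = ∑ i, v i • f (π (Pi.single i 1)) := by rw [map_sum, map_sum]; simp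
  let Φ : (X →ₗ[Λ] Y) →ₗ[R] (Fin n → Y) :=
    { toFun := fun f i => f (xg i)
      map_add' := by intro f g; funext i; simp
      map_smul' := by intro r f; funext i; simp }
  have hΦinj : Function.Injective Φ := by
    rw [injective_iff_map_eq_zero]
    intro f hf
    ext x
    obtain ⟨v, rfl⟩ := hπ x
    rw [hgen f v]
    have : ∀ i, f (xg i) = 0 := fun i => congrFun hf i
    simp [this]
  -- the quotient is torsion-free
  have hQ : NoZeroSMulDivisors R ((Fin n → Y) ⧸ LinearMap.range Φ) := by
    constructor
    intro r q hrq
    by_cases hr : r = 0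
    · exact Or.inl hr
    refine Or.inr ?_
    obtain ⟨y, rfl⟩ := Submodule.Quotient.mk_surjective _ q
    rw [← Submodule.Quotient.mk_smul, Submodule.Quotient.mk_eq_zero] at hrq
    rw [Submodule.Quotient.mk_eq_zero]
    obtain ⟨f, hf⟩ := hrq
    -- every value of f is divisible by r
    have hdiv : ∀ x : X, ∃ z : Y, r • z = f x := by
      intro x
      obtain ⟨v, rfl⟩ := hπ x
      refine ⟨∑ i, v i • y i, ?_⟩
      rw [hgen f v, Finset.smul_sum]
      refine Finset.sum_congr rfl fun i _ => ?_
      rw [← hsmul_comm]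
      congr 1
      exact (congrFun hf i).symm
    choose g0 hg0 using hdiv
    have hrinj : Function.Injective (fun z : Y => r • z) := smul_right_injective Y hr
    let g : X →ₗ[Λ] Y :=
      { toFun := g0
        map_add' := by
          intro x x'
          apply hrinj
          show r • _ = r • _
          rw [hg0, smul_add, hg0, hg0, map_add]
        map_smul' := by
          intro l x
          apply hrinj
          show r • _ = r • _
          rw [hg0, ← hsmul_comm, hg0, map_smul]
          rfl }
    refine ⟨g, ?_⟩
    funext i
    apply hrinj
    show r • g0 (xg i) = r • y i
    rw [hg0]
    exact congrFun hf i
  have hB : Module.IsReflexive R (Fin n → Y) := isReflexive_pi_fin n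
  have hfin : Module.Finite R (Fin n → Y) := Module.Finite.pi
  have hA : Module.IsReflexive R (LinearMap.range Φ) :=
    isReflexive_of_quotient_torsionFree (LinearMap.range Φ)
  exact Module.equiv (LinearEquiv.ofInjective Φ hΦinj).symm
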